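/- arXiv:2402.04201 — 3 statements merged into one kernel-verified Lean document; each statement's English description precedes it below -/
import Mathlib

section
/- Let M be a geodesic metric space, N a metric space, and (Z_i)_{i∈ℕ} a countable family of sets covering M. If f : M → N is continuous and its restriction to each Z_i is Lipschitz with constant at most L, then f is Lipschitz with constant at most L. -/
/-!
Pulling `f` back along a geodesic reduces the theorem to a continuous `g : ℝ → N` that is
`L`-Lipschitz on each set of a countable cover of `ℝ`. Call `t` good if `g` is `L`-Lipschitz on a
neighbourhood of `t`; by real induction, `g` is `L`-Lipschitz on every interval of good points.
If the closed set `F` of bad points were nonempty, Baire's theorem would give a piece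
`F ∩ (t - δ, t + δ)`, `t ∈ F`, inside the closure of a single cover set, on which `g` is
`L`-Lipschitz by continuity. For `p ≤ q` near `t`, this bounds `g` between the extreme bad points
`a ≤ b` of `[p, q]`, while `[p, a]` and `[b, q]` contain no bad interior points; so `t` is good.
-/

open Metric Set Topology
open scoped NNReal

section Locus

variable {α β : Type*} [PseudoEMetricSpace α] [PseudoEMetricSpace β]

def lipschitzLocus (L : ℝ≥0) (g : α → β) : Set α :=
  {t | ∃ V ∈ 𝓝 t, LipschitzOnWith L g V}

theorem isOpen_lipschitzLocus (L : ℝ≥0) (g : α → β) : IsOpen (lipschitzLocus L g) :=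
  isOpen_iff_mem_nhds.2 fun _ ⟨V, hV, hg⟩ ↦
    (eventually_eventually_nhds.2 hV).mono fun _ hV' ↦ ⟨V, hV', hg⟩

theorem continuousAt_of_mem_lipschitzLocus {L : ℝ≥0} {g : α → β} {t : α}
    (ht : t ∈ lipschitzLocus L g) : ContinuousAt g t :=
  let ⟨_, hV, hg⟩ := ht
  hg.continuousOn.continuousAt hV

end Locus

section RealLine

variable {β : Type*} [PseudoMetricSpace β] {L : ℝ≥0} {g : ℝ → β}

theorem lipschitzOnWith_of_dist_le_mul_of_le {s : Set ℝ}
    (h : ∀ p ∈ s, ∀ q ∈ s, p ≤ q → dist (g p) (g q) ≤ L * (q - p)) :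
    LipschitzOnWith L g s := by
  refine LipschitzOnWith.of_dist_le_mul fun p hp q hq ↦ ?_
  rcases le_total p q with hpq | hqp
  · simpa [Real.dist_eq, abs_of_nonpos (sub_nonpos.2 hpq)] using h p hp q hq hpq
  · simpa [Real.dist_eq, dist_comm, abs_of_nonneg (sub_nonneg.2 hqp)] using h q hq p hp hqp

theorem dist_le_of_Icc_subset_lipschitzLocus {p q : ℝ} (hpq : p ≤ q)
    (hU : Icc p q ⊆ lipschitzLocus L g) : dist (g p) (g q) ≤ L * (q - p) := by
  let s := {t | dist (g p) (g t) ≤ L * (t - p)}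
  have hcont : ContinuousOn g (Icc p q) := fun t ht ↦
    (continuousAt_of_mem_lipschitzLocus (hU ht)).continuousWithinAt
  have hclosed : IsClosed (s ∩ Icc p q) := by
    rw [inter_comm]
    exact isClosed_Icc.isClosed_le ((continuous_const.dist continuous_id).comp_continuousOn hcont)
      (by fun_prop)
  have hstep : ∀ x ∈ s ∩ Ico p q, s ∈ 𝓝[>] x := by
    rintro x ⟨hxs, hx⟩
    obtain ⟨V, hV, hgV⟩ := hU (Ico_subset_Icc_self hx)
    filter_upwards [nhdsWithin_le_nhds hV, self_mem_nhdsWithin] with t htV (hxt : x < t)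
    calc dist (g p) (g t) ≤ dist (g p) (g x) + dist (g x) (g t) := dist_triangle _ _ _
      _ ≤ L * (x - p) + L * (t - x) := by
        gcongr
        · exact hxs
        · simpa [Real.dist_eq, abs_of_neg (sub_neg.2 hxt)] using
            hgV.dist_le_mul x (mem_of_mem_nhds hV) t htV
      _ = L * (t - p) := by ring
  exact hclosed.Icc_subset_of_forall_mem_nhdsWithin (by simp [s]) hstep ⟨hpq, le_rfl⟩

theorem dist_le_of_Ioo_subset_lipschitzLocus {p q : ℝ} (hpq : p ≤ q)
    (hg : ContinuousOn g (Icc p q)) (hU : Ioo p q ⊆ lipschitzLocus L g) :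
    dist (g p) (g q) ≤ L * (q - p) := by
  rcases hpq.eq_or_lt with rfl | hpq
  · simp
  -- shrink `[p, q]` symmetrically to `[p + ε, q - ε]` and let `ε → 0`
  set c := (q - p) / 2 with hc_def
  have hc0 : 0 < c := half_pos (sub_pos.2 hpq)
  have hc : 0 ∈ closure (Ioo 0 c) := by
    rw [closure_Ioo hc0.ne]; exact ⟨le_rfl, hc0.le⟩
  have hmaps : MapsTo (fun ε : ℝ ↦ p + ε) (Ioo 0 c) (Icc p q) := fun ε hε ↦
    ⟨by dsimp only; linarith [hε.1], by dsimp only; linarith [hε.2]⟩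
  have hmaps' : MapsTo (fun ε : ℝ ↦ q - ε) (Ioo 0 c) (Icc p q) := fun ε hε ↦
    ⟨by dsimp only; linarith [hε.2], by dsimp only; linarith [hε.1]⟩
  have hleft : ContinuousWithinAt (fun ε ↦ g (p + ε)) (Ioo 0 c) 0 :=
    (hg p ⟨le_rfl, hpq.le⟩).comp_of_eq (by fun_prop) hmaps (add_zero p)
  have hright : ContinuousWithinAt (fun ε ↦ g (q - ε)) (Ioo 0 c) 0 :=
    (hg q ⟨hpq.le, le_rfl⟩).comp_of_eq (by fun_prop) hmaps' (sub_zero q)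
  have key := ContinuousWithinAt.closure_le (f := fun ε ↦ dist (g (p + ε)) (g (q - ε)))
    (g := fun ε ↦ L * ((q - ε) - (p + ε))) hc (hleft.dist hright) (by fun_prop)
    fun ε hε ↦ dist_le_of_Icc_subset_lipschitzLocus (by linarith [hε.2])
      fun t ht ↦ hU ⟨by linarith [hε.1, ht.1], by linarith [hε.1, ht.2]⟩
  simpa using key

theorem dist_le_of_lipschitzOnWith_diff_lipschitzLocus {p q : ℝ} (hpq : p ≤ q)
    (hg : ContinuousOn g (Icc p q)) (hK : LipschitzOnWith L g (Icc p q \ lipschitzLocus L g)) :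
    dist (g p) (g q) ≤ L * (q - p) := by
  set K := Icc p q \ lipschitzLocus L g
  rcases K.eq_empty_or_nonempty with hK₀ | hKne
  · exact dist_le_of_Ioo_subset_lipschitzLocus hpq hg
      (Ioo_subset_Icc_self.trans (sdiff_eq_empty.1 hK₀))
  have hKc : IsClosed K := isClosed_Icc.sdiff (isOpen_lipschitzLocus L g)
  have hbelow : BddBelow K := ⟨p, fun t ht ↦ ht.1.1⟩
  have habove : BddAbove K := ⟨q, fun t ht ↦ ht.1.2⟩
  set a := sInf K
  set b := sSup K
  have ha : a ∈ K := hKc.csInf_mem hKne hbelow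
  have hb : b ∈ K := hKc.csSup_mem hKne habove
  have hab : a ≤ b := csInf_le_csSup hKne hbelow habove
  have hpa : Ioo p a ⊆ lipschitzLocus L g := fun t ht ↦ by
    by_contra htU
    exact (csInf_le hbelow ⟨⟨ht.1.le, ht.2.le.trans ha.1.2⟩, htU⟩).not_gt ht.2
  have hbq : Ioo b q ⊆ lipschitzLocus L g := fun t ht ↦ by
    by_contra htU
    exact (le_csSup habove ⟨⟨hb.1.1.trans ht.1.le, ht.2.le⟩, htU⟩).not_gt ht.1
  calc dist (g p) (g q) ≤ dist (g p) (g a) + dist (g a) (g b) + dist (g b) (g q) :=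
        dist_triangle4 _ _ _ _
    _ ≤ L * (a - p) + L * (b - a) + L * (q - b) := by
        gcongr
        · exact dist_le_of_Ioo_subset_lipschitzLocus ha.1.1
            (hg.mono (Icc_subset_Icc_right ha.1.2)) hpa
        · simpa [Real.dist_eq, abs_of_nonpos (sub_nonpos.2 hab)] using hK.dist_le_mul a ha b hb
        · exact dist_le_of_Ioo_subset_lipschitzLocus hb.1.2
            (hg.mono (Icc_subset_Icc_left hb.1.1)) hbq
    _ = L * (q - p) := by ring

end RealLine

theorem exists_inter_ball_subset_closure_of_subset_iUnion {X ι : Type*} [PseudoMetricSpace X]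
    [CompleteSpace X] [Countable ι] {F : Set X} (hF : IsClosed F) (hne : F.Nonempty)
    {B : ι → Set X} (hB : F ⊆ ⋃ i, B i) :
    ∃ i, ∃ x ∈ F, ∃ δ > 0, F ∩ ball x δ ⊆ closure (B i) := by
  have : CompleteSpace F := hF.completeSpace_coe
  have : Nonempty F := hne.to_subtype
  obtain ⟨i, ⟨x, hx⟩⟩ := nonempty_interior_of_iUnion_of_closed
    (f := fun i ↦ ((↑) : F → X) ⁻¹' closure (B i))
    (fun i ↦ isClosed_closure.preimage continuous_subtype_val)
    (eq_univ_of_forall fun y ↦ by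
      obtain ⟨i, hi⟩ := mem_iUnion.1 (hB y.2)
      exact mem_iUnion.2 ⟨i, subset_closure hi⟩)
  obtain ⟨δ, hδ, hball⟩ := Metric.mem_nhds_iff.1 (mem_interior_iff_mem_nhds.1 hx)
  exact ⟨i, x, x.2, δ, hδ, fun y ⟨hyF, hy⟩ ↦ hball (a := ⟨y, hyF⟩) hy⟩

theorem Continuous.lipschitzWith_of_iUnion_eq_univ {β ι : Type*} [PseudoMetricSpace β]
    [Countable ι] {L : ℝ≥0} {g : ℝ → β} (hg : Continuous g) {B : ι → Set ℝ}
    (hB : ⋃ i, B i = univ) (hL : ∀ i, LipschitzOnWith L g (B i)) : LipschitzWith L g := by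
  suffices hU : lipschitzLocus L g = univ by
    rw [← lipschitzOnWith_univ]
    exact lipschitzOnWith_of_dist_le_mul_of_le fun p _ q _ hpq ↦
      dist_le_of_Icc_subset_lipschitzLocus hpq (hU ▸ subset_univ _)
  by_contra hne
  obtain ⟨i, x, hxF, δ, hδ, hsub⟩ := exists_inter_ball_subset_closure_of_subset_iUnion
    (isOpen_lipschitzLocus L g).isClosed_compl (nonempty_compl.2 hne) (hB ▸ subset_univ _)
  have hclosure : LipschitzOnWith L g (closure (B i)) := (hL i).closure hg.continuousOn
  refine hxF ⟨ball x δ, ball_mem_nhds x hδ, lipschitzOnWith_of_dist_le_mul_of_le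
    fun p hp q hq hpq ↦ dist_le_of_lipschitzOnWith_diff_lipschitzLocus hpq hg.continuousOn
      (hclosure.mono fun t ⟨ht, htU⟩ ↦ hsub ⟨htU, ?_⟩)⟩
  rw [Real.ball_eq_Ioo] at hp hq ⊢
  exact ordConnected_Ioo.out hp hq ht

theorem lipschitzWith_one_comp_projIcc {M : Type*} [PseudoMetricSpace M] {a b : ℝ} (hab : a ≤ b)
    {γ : ℝ → M} (hγ : ∀ s ∈ Icc a b, ∀ t ∈ Icc a b, dist (γ s) (γ t) = |s - t|) :
    LipschitzWith 1 fun t ↦ γ (projIcc a b hab t) :=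
  LipschitzWith.of_dist_le_mul fun s t ↦ by
    rw [hγ _ (projIcc a b hab s).2 _ (projIcc a b hab t).2, ← Real.dist_eq, ← Subtype.dist_eq]
    exact (LipschitzWith.projIcc hab).dist_le_mul s t

/-- In a geodesic metric space, a continuous function whose restrictions to a
countable covering family are uniformly `L`-Lipschitz is `L`-Lipschitz. -/
theorem stmt0 {M N : Type*} [MetricSpace M] [MetricSpace N]
    (hgeo : ∀ x y : M, ∃ γ : ℝ → M, γ 0 = x ∧ γ (dist x y) = y ∧
      ∀ s ∈ Set.Icc (0 : ℝ) (dist x y), ∀ t ∈ Set.Icc (0 : ℝ) (dist x y),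
        dist (γ s) (γ t) = |s - t|)
    (Z : ℕ → Set M) (hZ : (⋃ i, Z i) = Set.univ)
    (f : M → N) (hf : Continuous f) (L : NNReal)
    (hlip : ∀ i, LipschitzOnWith L f (Z i)) :
    LipschitzWith L f := by
  refine LipschitzWith.of_dist_le_mul fun x y ↦ ?_
  obtain ⟨γ, hγ0, hγ1, hγ⟩ := hgeo x y
  have hD : 0 ≤ dist x y := dist_nonneg
  set c := fun t ↦ γ (projIcc 0 (dist x y) hD t)
  have hc : LipschitzWith 1 c := lipschitzWith_one_comp_projIcc hD hγ
  have hfc : LipschitzWith L (f ∘ c) :=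
    (hf.comp hc.continuous).lipschitzWith_of_iUnion_eq_univ (B := fun i ↦ c ⁻¹' Z i)
      (by rw [← preimage_iUnion, hZ, preimage_univ])
      fun i ↦ by simpa using (hlip i).comp hc.lipschitzOnWith (mapsTo_preimage c (Z i))
  simpa [c, hγ0, hγ1, Real.dist_eq, abs_of_nonneg hD] using hfc.dist_le_mul 0 (dist x y)
end

section
/- Let M be a metric space, N ⊆ M a nonempty bounded subset, r : M → N a Lipschitz retraction (r is Lipschitz with r(y) = y for all y ∈ N), and ε > 0. Define λ(x) = max(1 − dist(x,N)/ε, 0). Then for every Lipschitz function f : N → ℝ with f vanishing at a fixed base point 0_M ∈ N, the function E f := (f ∘ r)·λ : M → ℝ extends f, vanishes outside the closed ε-neighborhood of N, and is Lipschitz with Lip(E f) ≤ (Lip(r) + diam(N)/ε) · Lip(f). -/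
open NNReal

/-- given a Lipschitz retraction `r` of `M` onto a bounded set `N` and the cutoff
`λ(x) = max(1 − dist(x,N)/ε, 0)`, the operator `E f = (f ∘ r)·λ` extends `f`, vanishes outside
the closed `ε`-neighbourhood of `N`, and `Lip(E f) ≤ (Lip(r) + diam(N)/ε)·Lip(f)`. -/
theorem stmt4 {M : Type*} [MetricSpace M] (N : Set M) (hNne : N.Nonempty)
    (hNb : Bornology.IsBounded N) (base : M) (hbase : base ∈ N)
    (r : M → M) (Kr : ℝ≥0) (hr : LipschitzWith Kr r)
    (hrange : ∀ x, r x ∈ N) (hretr : ∀ y ∈ N, r y = y)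
    (ε : ℝ) (hε : 0 < ε)
    (f : M → ℝ) (Kf : ℝ≥0) (hf : LipschitzOnWith Kf f N) (hf0 : f base = 0) :
    (∀ y ∈ N, f (r y) * max (1 - Metric.infDist y N / ε) 0 = f y) ∧
    (∀ x : M, ε < Metric.infDist x N → f (r x) * max (1 - Metric.infDist x N / ε) 0 = 0) ∧
    LipschitzWith ((Kr + Real.toNNReal (Metric.diam N / ε)) * Kf)
      (fun x => f (r x) * max (1 - Metric.infDist x N / ε) 0) := by
  set lam : M → ℝ := fun x => max (1 - Metric.infDist x N / ε) 0 with hlam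
  refine ⟨?_, ?_, ?_⟩
  · intro y hy
    rw [Metric.infDist_zero_of_mem hy, hretr y hy]
    simp
  · intro x hx
    have h1 : 1 < Metric.infDist x N / ε := (one_lt_div hε).mpr hx
    have : 1 - Metric.infDist x N / ε < 0 := by linarith
    rw [max_eq_right this.le, mul_zero]
  · apply LipschitzWith.of_dist_le_mul
    intro x y
    have hlam_nonneg : ∀ z, 0 ≤ lam z := fun z => le_max_right _ _
    have hlam_le_one : ∀ z, lam z ≤ 1 := by
      intro z
      refine max_le ?_ zero_le_one
      have h0 : 0 ≤ Metric.infDist z N / ε :=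
        div_nonneg Metric.infDist_nonneg hε.le
      linarith
    -- λ is (1/ε)-Lipschitz
    have hlam_lip : |lam x - lam y| ≤ dist x y / ε := by
      have h1 : |Metric.infDist x N - Metric.infDist y N| ≤ dist x y := by
        have := (Metric.lipschitz_infDist_pt N).dist_le_mul x y
        simpa [Real.dist_eq] using this
      have h2 : |lam x - lam y| ≤ |(1 - Metric.infDist x N / ε) - (1 - Metric.infDist y N / ε)| :=
        abs_max_sub_max_le_abs _ _ _
      have h3 : |(1 - Metric.infDist x N / ε) - (1 - Metric.infDist y N / ε)|
          = |Metric.infDist x N - Metric.infDist y N| / ε := by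
        rw [show (1 - Metric.infDist x N / ε) - (1 - Metric.infDist y N / ε)
            = (Metric.infDist y N - Metric.infDist x N) / ε by ring,
          abs_div, abs_of_pos hε, abs_sub_comm]
      calc |lam x - lam y| ≤ |Metric.infDist x N - Metric.infDist y N| / ε := by
            rw [← h3]; exact h2
        _ ≤ dist x y / ε := by gcongr
    -- |f (r x)| ≤ Kf * diam N
    have hbd : ∀ z, |f (r z)| ≤ Kf * Metric.diam N := by
      intro z
      have := hf.dist_le_mul (r z) (hrange z) base hbase
      rw [Real.dist_eq, hf0, sub_zero] at this
      refine this.trans ?_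
      gcongr
      exact Metric.dist_le_diam_of_mem hNb (hrange z) hbase
    -- |f (r x) - f (r y)| ≤ Kf * Kr * dist x y
    have hfr : |f (r x) - f (r y)| ≤ Kf * (Kr * dist x y) := by
      have h1 := hf.dist_le_mul (r x) (hrange x) (r y) (hrange y)
      rw [Real.dist_eq] at h1
      refine h1.trans ?_
      gcongr
      exact hr.dist_le_mul x y
    have key : |f (r x) * lam x - f (r y) * lam y| ≤
        |f (r x)| * |lam x - lam y| + |lam y| * |f (r x) - f (r y)| := by
      calc |f (r x) * lam x - f (r y) * lam y|
          = |f (r x) * (lam x - lam y) + lam y * (f (r x) - f (r y))| := by ring_nf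
        _ ≤ |f (r x) * (lam x - lam y)| + |lam y * (f (r x) - f (r y))| := abs_add_le _ _
        _ = |f (r x)| * |lam x - lam y| + |lam y| * |f (r x) - f (r y)| := by
            rw [abs_mul, abs_mul]
    rw [Real.dist_eq]
    have habs_lam : |lam y| = lam y := abs_of_nonneg (hlam_nonneg y)
    have hdnn : (0:ℝ) ≤ dist x y := dist_nonneg
    have hKf : (0:ℝ) ≤ Kf := Kf.coe_nonneg
    have step : |f (r x) * lam x - f (r y) * lam y| ≤
        (Kf * Metric.diam N) * (dist x y / ε) + 1 * (Kf * (Kr * dist x y)) := by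
      refine key.trans (add_le_add ?_ ?_)
      · exact mul_le_mul (hbd x) hlam_lip (abs_nonneg _)
          (mul_nonneg hKf Metric.diam_nonneg)
      · refine mul_le_mul ?_ hfr (abs_nonneg _) zero_le_one
        rw [habs_lam]; exact hlam_le_one y
    refine step.trans ?_
    have hcoe : ((Kr + Real.toNNReal (Metric.diam N / ε)) * Kf : ℝ≥0) =
        ((Kr : ℝ) + Metric.diam N / ε) * Kf := by
      push_cast
      rw [Real.coe_toNNReal _ (div_nonneg Metric.diam_nonneg hε.le)]
    rw [hcoe]
    ring_nf
    nlinarith [dist_nonneg (x := x) (y := y), Kf.coe_nonneg, Kr.coe_nonneg,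
      Metric.diam_nonneg (s := N), hε]
end

section
/- Let M be a geodesic pointed metric space covered by closed sets (P_n)_{n∈ℕ} with points p_n ∈ P_n, p_1 = 0_M, and suppose: (a) there are uniformly Lipschitz functions φ_n : M → [0,1] with Lipschitz constant L, φ_n(p_k) = δ_{kn}, and Σ_n φ_n = 1; (b) for each n, φ_k restricted to P_n is nonzero for at most N indices k, all satisfying d(p_k, p_n) ≤ D. Then for every Lipschitz f : {p_n : n ∈ ℕ} → ℝ with f(p_1) = 0, the function E f := Σ_n f(p_n) φ_n is a Lipschitz extension of f to M with Lip(E f) ≤ D·L·N·Lip(f). -/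
/-!
On a tile `P n` only the `φ k` with `k` active on the tile are nonzero, and they sum to one, so
`E u - E v = ∑ k, (f (p k) - f (p n)) * (φ k u - φ k v)`: at most `N` terms, each bounded by
`Kf * D * (L * dist u v)`. Hence `E` is `D * L * N * Kf`-Lipschitz on every tile. The same
computation for two tiles sharing an active index bounds `E` near every point, so `E` is continuous.

Along a geodesic segment, a continuous function that is `C`-Lipschitz on each of countably many
pieces covering the segment is `C`-Lipschitz: every point except the last point of some piece can
be joined to a later point with slope at most `C`, and these countably many exceptional points are
avoided by looking at the last time the function minus `C t` takes a well-chosen value.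
-/

open NNReal Set Topology

theorem le_of_forall_exists_right_le_off_countable {h : ℝ → ℝ} {a b : ℝ} (hab : a ≤ b)
    (hh : ContinuousOn h (Icc a b)) {Z : Set ℝ} (hZ : Z.Countable)
    (hstep : ∀ t ∈ Ico a b \ Z, ∃ z ∈ Ioc t b, h z ≤ h t) : h b ≤ h a := by
  by_contra! hlt
  obtain ⟨y, hyZ, hy⟩ : ∃ y ∈ (h '' Z)ᶜ, y ∈ Ioo (h a) (h b) :=
    ((hZ.image h).dense_compl ℝ).exists_mem_open isOpen_Ioo (nonempty_Ioo.2 hlt)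
  set S := Icc a b ∩ h ⁻¹' {y}
  have hS : IsClosed S := hh.preimage_isClosed_of_isClosed isClosed_Icc isClosed_singleton
  have hSne : S.Nonempty := intermediate_value_Icc hab hh ⟨hy.1.le, hy.2.le⟩
  have hSbdd : BddAbove S := bddAbove_Icc.mono inter_subset_left
  obtain ⟨⟨haT, hTb⟩, hTy⟩ : sSup S ∈ S := hS.csSup_mem hSne hSbdd
  have hTb' : sSup S < b := hTb.lt_of_ne fun hb => by
    rw [mem_preimage, hb, mem_singleton_iff] at hTy
    exact hy.2.ne' hTy
  obtain ⟨z, ⟨hTz, hzb⟩, hzT⟩ :=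
    hstep (sSup S) ⟨⟨haT, hTb'⟩, fun hTZ => hyZ ⟨_, hTZ, hTy⟩⟩
  obtain ⟨t, ⟨hzt, htb⟩, hty⟩ := intermediate_value_Icc hzb
    (hh.mono (Icc_subset_Icc (haT.trans hTz.le) le_rfl)) ⟨hzT.trans_eq hTy, hy.2.le⟩
  have htT : t ≤ sSup S := le_csSup hSbdd ⟨⟨haT.trans (hTz.le.trans hzt), htb⟩, hty⟩
  linarith

theorem dist_le_of_lipschitzOnWith_countable_cover {ι : Type*} [Countable ι] {g : ℝ → ℝ}
    {a b : ℝ} {C : ℝ≥0} (hab : a ≤ b) (hg : ContinuousOn g (Icc a b)) {F : ι → Set ℝ}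
    (hcover : Icc a b ⊆ ⋃ i, F i) (hF : ∀ i, LipschitzOnWith C g (F i)) :
    dist (g a) (g b) ≤ C * dist a b := by
  set Z := ⋃ i, {t | IsGreatest (F i ∩ Icc a b) t}
  have hZ : Z.Countable :=
    countable_iUnion fun i => (Subsingleton.countable fun _ hs _ ht => hs.unique ht)
  have hstep : ∀ t ∈ Ico a b \ Z, ∃ z ∈ Ioc t b, |g z - g t| ≤ C * (z - t) := by
    rintro t ⟨⟨hat, htb⟩, htZ⟩
    obtain ⟨i, hti⟩ := mem_iUnion.1 (hcover ⟨hat, htb.le⟩)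
    have hnot : ¬ IsGreatest (F i ∩ Icc a b) t := fun ht => htZ (mem_iUnion.2 ⟨i, ht⟩)
    obtain ⟨z, hzi, -, hzb, htz⟩ : ∃ z ∈ F i, a ≤ z ∧ z ≤ b ∧ t < z := by
      simpa [IsGreatest, upperBounds, hti, hat, htb.le] using hnot
    refine ⟨z, ⟨htz, hzb⟩, ?_⟩
    rw [← Real.dist_eq, ← abs_of_pos (sub_pos.2 htz), ← Real.dist_eq]
    exact (hF i).dist_le_mul z hzi t hti
  have hcont : ContinuousOn (fun t => (C : ℝ) * t) (Icc a b) := by fun_prop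
  have hup := le_of_forall_exists_right_le_off_countable (h := fun t => g t - C * t) hab
    (hg.sub hcont) hZ fun t ht => by
      obtain ⟨z, hz, hzt⟩ := hstep t ht
      exact ⟨z, hz, by linarith [le_abs_self (g z - g t)]⟩
  have hdown := le_of_forall_exists_right_le_off_countable (h := fun t => -g t - C * t) hab
    (hg.neg.sub hcont) hZ fun t ht => by
      obtain ⟨z, hz, hzt⟩ := hstep t ht
      exact ⟨z, hz, by linarith [neg_abs_le (g z - g t)]⟩
  rw [Real.dist_eq, Real.dist_eq, abs_sub_comm, abs_sub_comm a, abs_of_nonneg (sub_nonneg.2 hab),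
    abs_sub_le_iff]
  constructor <;> linarith

theorem LipschitzWith.of_geodesic_of_countable_cover {M ι : Type*} [PseudoMetricSpace M]
    [Countable ι]
    (hgeo : ∀ x y : M, ∃ γ : ℝ → M, γ 0 = x ∧ γ (dist x y) = y ∧
      ∀ s ∈ Icc (0 : ℝ) (dist x y), ∀ t ∈ Icc (0 : ℝ) (dist x y),
        dist (γ s) (γ t) = |s - t|)
    {E : M → ℝ} (hE : Continuous E) {P : ι → Set M} (hcover : ∀ x, ∃ i, x ∈ P i)
    {C : ℝ≥0} (hP : ∀ i, LipschitzOnWith C E (P i)) : LipschitzWith C E := by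
  refine LipschitzWith.of_dist_le_mul fun x y => ?_
  obtain ⟨γ, hγx, hγy, hγ⟩ := hgeo x y
  have hγlip : LipschitzOnWith 1 γ (Icc 0 (dist x y)) :=
    LipschitzOnWith.of_dist_le_mul fun s hs t ht => by simp [hγ s hs t ht, Real.dist_eq]
  have h := dist_le_of_lipschitzOnWith_countable_cover dist_nonneg
    (hE.comp_continuousOn hγlip.continuousOn) (F := fun i => Icc 0 (dist x y) ∩ γ ⁻¹' P i)
    (fun t ht => mem_iUnion.2 ((hcover (γ t)).imp fun _ hi => ⟨ht, hi⟩))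
    fun i => LipschitzOnWith.of_dist_le_mul fun s ⟨hs, hsi⟩ t ⟨ht, hti⟩ => by
      simpa [hγ s hs t ht, Real.dist_eq] using (hP i).dist_le_mul _ hsi _ hti
  simpa [hγx, hγy] using h

theorem abs_sum_mul_sub_sum_mul_le {ι : Type*} (s : Finset ι) {a w w' : ι → ℝ}
    (hw : ∑ k ∈ s, w k = 1) (hw' : ∑ k ∈ s, w' k = 1) {c R δ : ℝ} (hR : 0 ≤ R)
    (ha : ∀ k ∈ s, |a k - c| ≤ R) (hδ : ∀ k ∈ s, |w k - w' k| ≤ δ) :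
    |∑ k ∈ s, a k * w k - ∑ k ∈ s, a k * w' k| ≤ s.card * (R * δ) := by
  have hrecenter : ∑ k ∈ s, a k * w k - ∑ k ∈ s, a k * w' k
      = ∑ k ∈ s, (a k - c) * (w k - w' k) := by
    simp only [sub_mul, mul_sub, Finset.sum_sub_distrib, ← Finset.mul_sum, hw, hw']
    ring
  calc |∑ k ∈ s, a k * w k - ∑ k ∈ s, a k * w' k|
      ≤ ∑ k ∈ s, |(a k - c) * (w k - w' k)| := hrecenter ▸ Finset.abs_sum_le_sum_abs _ _
    _ ≤ ∑ _k ∈ s, R * δ := Finset.sum_le_sum fun k hk => by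
        rw [abs_mul]
        exact mul_le_mul (ha k hk) (hδ k hk) (abs_nonneg _) hR
    _ = s.card * (R * δ) := by rw [Finset.sum_const, nsmul_eq_mul]

section PartitionOfUnity

variable {ι M : Type*}

def activeIndices (P : ι → Set M) (φ : ι → M → ℝ) (n : ι) : Set ι :=
  {k | ∃ x ∈ P n, φ k x ≠ 0}

variable {P : ι → Set M} {φ : ι → M → ℝ} {L : ℝ≥0}

theorem eq_zero_of_notMem_activeIndices {n k : ι} {x : M} (hx : x ∈ P n)
    (hk : k ∉ activeIndices P φ n) : φ k x = 0 :=
  not_not.1 fun h => hk ⟨x, hx, h⟩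

variable [PseudoMetricSpace M]

theorem abs_tsum_mul_sub_tsum_mul_le (hφsum : ∀ x, ∑' k, φ k x = 1)
    (hφlip : ∀ k, LipschitzWith L (φ k)) {a : ι → ℝ} {n m : ι} {u v : M} (hu : u ∈ P n)
    (hv : v ∈ P m) {s : Finset ι} (hs : activeIndices P φ n ∪ activeIndices P φ m ⊆ s)
    {c R : ℝ} (hR : 0 ≤ R) (ha : ∀ k ∈ s, |a k - c| ≤ R) :
    |∑' k, a k * φ k u - ∑' k, a k * φ k v| ≤ s.card * (R * (L * dist u v)) := by
  have hu0 : ∀ k ∉ s, φ k u = 0 := fun k hk =>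
    eq_zero_of_notMem_activeIndices hu fun h => hk (hs (Or.inl h))
  have hv0 : ∀ k ∉ s, φ k v = 0 := fun k hk =>
    eq_zero_of_notMem_activeIndices hv fun h => hk (hs (Or.inr h))
  rw [tsum_eq_sum fun k hk => by rw [hu0 k hk, mul_zero],
    tsum_eq_sum fun k hk => by rw [hv0 k hk, mul_zero]]
  refine abs_sum_mul_sub_sum_mul_le s ?_ ?_ hR ha fun k _ => ?_
  · simpa only [tsum_eq_sum hu0] using hφsum u
  · simpa only [tsum_eq_sum hv0] using hφsum v
  · rw [← Real.dist_eq]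
    exact (hφlip k).dist_le_mul u v

variable {p : ι → M} {f : M → ℝ} {Kf D : ℝ≥0}

theorem abs_sub_le_of_mem_activeIndices (hf : LipschitzOnWith Kf f (range p)) {n k : ι}
    (hD : ∀ k ∈ activeIndices P φ n, dist (p k) (p n) ≤ D)
    (hk : k ∈ activeIndices P φ n) :
    |f (p k) - f (p n)| ≤ Kf * D := by
  rw [← Real.dist_eq]
  exact (hf.dist_le_mul _ ⟨k, rfl⟩ _ ⟨n, rfl⟩).trans (by gcongr; exact hD k hk)

theorem lipschitzOnWith_tsum_mul_of_activeIndices (hφsum : ∀ x, ∑' k, φ k x = 1)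
    (hφlip : ∀ k, LipschitzWith L (φ k)) (hf : LipschitzOnWith Kf f (range p))
    {n : ι} {N : ℕ} (hfin : (activeIndices P φ n).Finite)
    (hcard : Nat.card (activeIndices P φ n) ≤ N)
    (hD : ∀ k ∈ activeIndices P φ n, dist (p k) (p n) ≤ D) :
    LipschitzOnWith (D * L * N * Kf) (fun x => ∑' k, f (p k) * φ k x) (P n) := by
  refine LipschitzOnWith.of_dist_le_mul fun u hu v hv => ?_
  have hN : (hfin.toFinset.card : ℝ) ≤ N := by
    rwa [← Nat.card_eq_card_finite_toFinset hfin, Nat.cast_le]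
  rw [Real.dist_eq]
  calc _ ≤ hfin.toFinset.card * (Kf * D * (L * dist u v)) :=
        abs_tsum_mul_sub_tsum_mul_le hφsum hφlip hu hv (by simp) (by positivity)
          fun k hk => abs_sub_le_of_mem_activeIndices hf hD (hfin.mem_toFinset.1 hk)
    _ ≤ N * (Kf * D * (L * dist u v)) := by gcongr
    _ = _ := by push_cast; ring

theorem continuous_tsum_mul_of_activeIndices (hφsum : ∀ x, ∑' k, φ k x = 1)
    (hφlip : ∀ k, LipschitzWith L (φ k)) (hf : LipschitzOnWith Kf f (range p))
    (hcover : ∀ x, ∃ n, x ∈ P n) {N : ℕ} (hfin : ∀ n, (activeIndices P φ n).Finite)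
    (hcard : ∀ n, Nat.card (activeIndices P φ n) ≤ N)
    (hD : ∀ n, ∀ k ∈ activeIndices P φ n, dist (p k) (p n) ≤ D) :
    Continuous fun x => ∑' k, f (p k) * φ k x := by
  classical
  refine continuous_iff_continuousAt.2 fun z => ?_
  obtain ⟨n, hz⟩ := hcover z
  have hz0 : ∀ k ∉ (hfin n).toFinset, φ k z = 0 := fun k hk =>
    eq_zero_of_notMem_activeIndices hz fun h => hk ((hfin n).mem_toFinset.2 h)
  have hone : ∑ k ∈ (hfin n).toFinset, φ k z = 1 := by
    simpa only [tsum_eq_sum hz0] using hφsum z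
  have hpos : ∀ᶠ w in 𝓝 z, 0 < ∑ k ∈ (hfin n).toFinset, φ k w :=
    (continuous_finsetSum _ fun k _ => (hφlip k).continuous).continuousAt.eventually
      (lt_mem_nhds (by simp only [hone, zero_lt_one]))
  obtain ⟨r, hr, hball⟩ := Metric.eventually_nhds_iff.1 hpos
  refine continuousAt_of_locally_lipschitz hr (2 * N * (3 * Kf * D) * L) fun w hw => ?_
  obtain ⟨m, hw'⟩ := hcover w
  obtain ⟨k₀, hk₀n, hk₀w⟩ : ∃ k ∈ (hfin n).toFinset, φ k w ≠ 0 := by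
    by_contra! h
    exact (hball hw).ne' (Finset.sum_eq_zero h)
  -- `k₀` is active on both tiles, so the net values on tile `m` stay within `3 Kf D` of `f (p n)`
  have hk₀m : k₀ ∈ activeIndices P φ m := ⟨w, hw', hk₀w⟩
  have hbound :
      ∀ k ∈ (hfin m).toFinset ∪ (hfin n).toFinset, |f (p k) - f (p n)| ≤ 3 * Kf * D := by
    have hKD := abs_sub_le_of_mem_activeIndices hf (hD n) ((hfin n).mem_toFinset.1 hk₀n)
    have hKD' := abs_sub_le_of_mem_activeIndices hf (hD m) hk₀m
    intro k hk
    rcases Finset.mem_union.1 hk with hk | hk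
    · have hkm := abs_sub_le_of_mem_activeIndices hf (hD m) ((hfin m).mem_toFinset.1 hk)
      linarith [abs_sub_le (f (p k)) (f (p m)) (f (p n)),
        abs_sub_le (f (p m)) (f (p k₀)) (f (p n)), abs_sub_comm (f (p m)) (f (p k₀))]
    · have hkn := abs_sub_le_of_mem_activeIndices hf (hD n) ((hfin n).mem_toFinset.1 hk)
      linarith [mul_nonneg Kf.coe_nonneg D.coe_nonneg]
  have hN : (((hfin m).toFinset ∪ (hfin n).toFinset).card : ℝ) ≤ 2 * N := by
    have hm := hcard m
    have hn := hcard n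
    rw [Nat.card_eq_card_finite_toFinset (hfin m)] at hm
    rw [Nat.card_eq_card_finite_toFinset (hfin n)] at hn
    exact_mod_cast (Finset.card_union_le _ _).trans (by omega)
  rw [Real.dist_eq]
  calc _ ≤ ((hfin m).toFinset ∪ (hfin n).toFinset).card * (3 * Kf * D * (L * dist w z)) :=
        abs_tsum_mul_sub_tsum_mul_le hφsum hφlip hw' hz (by simp) (by positivity) hbound
    _ ≤ 2 * N * (3 * Kf * D * (L * dist w z)) := by gcongr
    _ = _ := by ring

end PartitionOfUnity

theorem stmt10_general {M : Type*} [MetricSpace M]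
    (hgeo : ∀ x y : M, ∃ γ : ℝ → M, γ 0 = x ∧ γ (dist x y) = y ∧
      ∀ s ∈ Set.Icc (0 : ℝ) (dist x y), ∀ t ∈ Set.Icc (0 : ℝ) (dist x y),
        dist (γ s) (γ t) = |s - t|)
    (P : ℕ → Set M) (hcover : ∀ x : M, ∃ n, x ∈ P n)
    (p : ℕ → M)
    (φ : ℕ → M → ℝ) (L : ℝ≥0)
    (hφlip : ∀ n, LipschitzWith L (φ n))
    (hφδ : ∀ n k, φ n (p k) = if k = n then (1 : ℝ) else 0)
    (hφsum : ∀ x : M, ∑' n, φ n x = 1)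
    (N : ℕ) (D : ℝ≥0)
    (hfin : ∀ n, {k : ℕ | ∃ x ∈ P n, φ k x ≠ 0}.Finite ∧
      Nat.card {k : ℕ | ∃ x ∈ P n, φ k x ≠ 0} ≤ N ∧
      ∀ k ∈ {k : ℕ | ∃ x ∈ P n, φ k x ≠ 0}, dist (p k) (p n) ≤ D)
    (f : M → ℝ) (Kf : ℝ≥0)
    (hf : LipschitzOnWith Kf f (Set.range p)) :
    (∀ k, (∑' n, f (p n) * φ n (p k)) = f (p k)) ∧
    LipschitzWith (D * L * N * Kf) (fun x => ∑' n, f (p n) * φ n x) := by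
  refine ⟨fun k => ?_, ?_⟩
  · rw [tsum_eq_single k fun n hn => by rw [hφδ, if_neg (Ne.symm hn), mul_zero], hφδ,
      if_pos rfl, mul_one]
  · exact LipschitzWith.of_geodesic_of_countable_cover hgeo
      (continuous_tsum_mul_of_activeIndices hφsum hφlip hf hcover (fun n => (hfin n).1)
        (fun n => (hfin n).2.1) fun n => (hfin n).2.2)
      hcover fun n =>
        lipschitzOnWith_tsum_mul_of_activeIndices hφsum hφlip hf (hfin n).1 (hfin n).2.1
          (hfin n).2.2

/-- extension operator from a net.  Given a geodesic pointed metric space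
covered by closed tiles `P n` with centres `p n` (`p 0` the base point), a Lipschitz partition
of unity `φ_n` with `φ_n(p_k) = δ_{kn}` such that on each tile at most `N` of the `φ_k` are
nonzero, all with `dist(p_k, p_n) ≤ D`, the operator `E f = Σ_n f(p_n) φ_n` extends any
Lipschitz function `f` on the net vanishing at the base point, with
`Lip(E f) ≤ D·L·N·Lip(f)`. -/
theorem stmt10 {M : Type*} [MetricSpace M] (base : M)
    (hgeo : ∀ x y : M, ∃ γ : ℝ → M, γ 0 = x ∧ γ (dist x y) = y ∧
      ∀ s ∈ Set.Icc (0 : ℝ) (dist x y), ∀ t ∈ Set.Icc (0 : ℝ) (dist x y),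
        dist (γ s) (γ t) = |s - t|)
    (P : ℕ → Set M) (hclosed : ∀ n, IsClosed (P n)) (hcover : ∀ x : M, ∃ n, x ∈ P n)
    (p : ℕ → M) (hp : ∀ n, p n ∈ P n) (hp0 : p 0 = base)
    (φ : ℕ → M → ℝ) (L : ℝ≥0)
    (hφrange : ∀ n x, φ n x ∈ Set.Icc (0 : ℝ) 1)
    (hφlip : ∀ n, LipschitzWith L (φ n))
    (hφδ : ∀ n k, φ n (p k) = if k = n then (1 : ℝ) else 0)
    (hφsum : ∀ x : M, ∑' n, φ n x = 1)
    (N : ℕ) (D : ℝ≥0)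
    (hfin : ∀ n, {k : ℕ | ∃ x ∈ P n, φ k x ≠ 0}.Finite ∧
      Nat.card {k : ℕ | ∃ x ∈ P n, φ k x ≠ 0} ≤ N ∧
      ∀ k ∈ {k : ℕ | ∃ x ∈ P n, φ k x ≠ 0}, dist (p k) (p n) ≤ D)
    (f : M → ℝ) (Kf : ℝ≥0)
    (hf : LipschitzOnWith Kf f (Set.range p)) (hf0 : f base = 0) :
    (∀ k, (∑' n, f (p n) * φ n (p k)) = f (p k)) ∧
    LipschitzWith (D * L * N * Kf) (fun x => ∑' n, f (p n) * φ n x) :=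
  stmt10_general hgeo P hcover p φ L hφlip hφδ hφsum N D hfin f Kf hf
end
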